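/- (Ku–Wales monotonicity, combinatorial form.) Let μ and λ be integer partitions of the same integer n with μ₁ = λ₁ and μ ⊴ λ in dominance order (i.e. Σ_{i=1}^{t} μ_i ≤ Σ_{i=1}^{t} λ_i for every t). Then d^μ_k ≤ d^λ_k for every k ≥ 1; consequently D^μ_α ≤ D^λ_α for every real α ≥ 0. -/

import Mathlib

open Finset

/-- The conjugate partition: `conjP L j = λ′_j = #{i : λ_i ≥ j}`. -/
def conjP (L : List ℕ) (j : ℕ) : ℕ := (L.filter (fun p => decide (j ≤ p))).length

/-- `L` is the list of parts of an integer partition (weakly decreasing, positive parts). -/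
def IsPartition (L : List ℕ) : Prop := L.Pairwise (· ≥ ·) ∧ ∀ p ∈ L, 0 < p

/-- Colored permutations of shape `L`: a coloring `c` of the symbols `1,…,λ₁` (represented by
`Fin λ₁`, symbol `i` being `i.1 + 1`) with `1 ≤ c i ≤ λ′_i`, together with a permutation whose
cycles are monochromatic. -/
def ColoredPerms (L : List ℕ) :
    Set ((Fin L.headI → ℕ) × Equiv.Perm (Fin L.headI)) :=
  {x | (∀ i, 1 ≤ x.1 i ∧ x.1 i ≤ conjP L (i.1 + 1)) ∧ ∀ i, x.1 (x.2 i) = x.1 i}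

/-- Colored derangements of shape `L`: colored permutations such that `σ i = i → c i ≠ 1`. -/
def ColoredDerangements (L : List ℕ) :
    Set ((Fin L.headI → ℕ) × Equiv.Perm (Fin L.headI)) :=
  {x | x ∈ ColoredPerms L ∧ ∀ i, x.2 i = i → x.1 i ≠ 1}

/-- Number of cycles of a permutation in its disjoint cycle decomposition,
fixed points counting as cycles. -/
noncomputable def cycleCount {m : ℕ} (σ : Equiv.Perm (Fin m)) : ℕ :=
  σ.cycleType.card + (Finset.univ.filter fun i => σ i = i).card

/-- `dCount L k` : the number `d^λ_k` of colored derangements of shape `L`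
whose permutation has exactly `k` cycles. -/
noncomputable def dCount (L : List ℕ) (k : ℕ) : ℕ :=
  Set.ncard {x | x ∈ ColoredDerangements L ∧ cycleCount x.2 = k}

/-- The λ-Jack derangement number `D^λ_α = Σ_{k=1}^{λ₁} d^λ_k α^{λ₁−k}`. -/
noncomputable def JackD (L : List ℕ) (α : ℝ) : ℝ :=
  ∑ k ∈ Finset.Icc 1 L.headI, (dCount L k : ℝ) * α ^ (L.headI - k)

/-- Block (0-based) of a point of `{1,…,2m}` (points represented by `Fin (2m)`,
point `p` being `p.1 + 1`; the block of `p` is `k` iff `p ∈ {2k−1, 2k}` 1-based). -/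
def blk {m : ℕ} (p : Fin (2 * m)) : Fin m := ⟨p.1 / 2, by have := p.2; omega⟩

/-- Colored perfect matchings of shape `L`: a perfect matching of `{1,…,2λ₁}` (a
fixed-point-free involution) together with a coloring `c` of the blocks `{2k−1,2k}` with
`1 ≤ c_k ≤ λ′_k`, such that matched points lie in blocks of the same color. -/
def ColoredMatchings (L : List ℕ) :
    Set ((Fin L.headI → ℕ) × Equiv.Perm (Fin (2 * L.headI))) :=
  {x | Function.Involutive x.2 ∧ (∀ p, x.2 p ≠ p) ∧
        (∀ k, 1 ≤ x.1 k ∧ x.1 k ≤ conjP L (k.1 + 1)) ∧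
        (∀ p, x.1 (blk (x.2 p)) = x.1 (blk p))}

/-- Colored perfect matching derangements of shape `L`: colored perfect matchings such that
whenever a block `{2k−1,2k}` is itself a pair of the matching, its color is not `1`. -/
def ColoredMatchDerangements (L : List ℕ) :
    Set ((Fin L.headI → ℕ) × Equiv.Perm (Fin (2 * L.headI))) :=
  {x | x ∈ ColoredMatchings L ∧ ∀ p, blk (x.2 p) = blk p → x.1 (blk p) ≠ 1}

/-- The principal lower hook length `h_j = α(λ₁ − j) + λ′_j` of the cell `(1,j)`. -/
noncomputable def hlow (L : List ℕ) (α : ℝ) (j : ℕ) : ℝ :=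
  α * ((L.headI : ℝ) - (j : ℝ)) + (conjP L j : ℝ)

/-- `fixPtCount m k` : the number `d_{m,k}` of permutations of `{1,…,m}` with exactly
`k` fixed points. -/
noncomputable def fixPtCount (m k : ℕ) : ℕ :=
  Set.ncard {σ : Equiv.Perm (Fin m) | (Finset.univ.filter fun i => σ i = i).card = k}

/-- `Ematch m` : the number of perfect matchings of `{1,…,2m}` containing none of the base
pairs `{2t−1, 2t}`. -/
noncomputable def Ematch (m : ℕ) : ℕ :=
  Set.ncard {σ : Equiv.Perm (Fin (2 * m)) |
    Function.Involutive σ ∧ (∀ p, σ p ≠ p) ∧ ∀ p, (σ p).1 / 2 ≠ p.1 / 2}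

/-!
Conjugation reverses dominance, so `λ′ ⊴ μ′`, and `d^λ_k` only depends on the sequence of color
bounds `λ′_1, …, λ′_{λ₁}`. The sequence `λ′` is reached from `μ′` by moving single units from
an entry `x_b` of the current sequence to a later entry `x_a ≤ x_b - 2`, so it suffices that
such a move does not decrease the count. Colored derangements in which `b` does not have the
top color `x_b` stay valid; the others are conjugated by the transposition `(b a)`, and the
cycle now through `a` is recolored `x_a + 1`. This is injective, and the two kinds of images
are told apart by the color of `a`.
-/

open Equiv

lemma card_fixedPoints_conj {α : Type*} [Fintype α] [DecidableEq α] (σ τ : Perm α) :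
    #{i | (τ * σ * τ⁻¹) i = i} = #{i | σ i = i} := by
  refine Finset.card_nbij' τ.symm τ ?_ ?_ (fun i _ => by simp) (fun i _ => by simp) <;>
    intro i <;> simp [← Equiv.eq_symm_apply]

lemma cycleCount_conj {m : ℕ} (σ τ : Perm (Fin m)) :
    cycleCount (τ * σ * τ⁻¹) = cycleCount σ := by
  rw [cycleCount, cycleCount, Perm.cycleType_conj, card_fixedPoints_conj]

lemma Equiv.Perm.SameCycle.eq_of_invariant {α β : Type*} {σ : Perm α} {c : α → β}
    (hc : ∀ i, c (σ i) = c i) {a b : α} (h : σ.SameCycle a b) : c b = c a := by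
  obtain ⟨n, rfl⟩ := h
  induction n using Int.induction_on with
  | zero => simp
  | succ n ih => rw [add_comm, zpow_add, zpow_one, Perm.mul_apply, hc, ih]
  | pred n ih =>
    rw [sub_eq_neg_add, zpow_add, zpow_neg_one, Perm.mul_apply, ← hc (σ⁻¹ _),
      ← ih]
    simp

def BoundedColoredDerangements (m : ℕ) (x : ℕ → ℕ) : Set ((Fin m → ℕ) × Perm (Fin m)) :=
  {z | (∀ i, 1 ≤ z.1 i ∧ z.1 i ≤ x i) ∧ (∀ i, z.1 (z.2 i) = z.1 i) ∧ ∀ i, z.2 i = i → z.1 i ≠ 1}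

noncomputable def boundedDerangementCount (m : ℕ) (x : ℕ → ℕ) (k : ℕ) : ℕ :=
  {z | z ∈ BoundedColoredDerangements m x ∧ cycleCount z.2 = k}.ncard

def transfer (x : ℕ → ℕ) (p q : ℕ) : ℕ → ℕ :=
  Function.update (Function.update x p (x p - 1)) q (x q + 1)

section transfer

variable {x : ℕ → ℕ} {p q : ℕ}

lemma transfer_apply_left (h : p ≠ q) : transfer x p q p = x p - 1 := by
  simp [transfer, h]

lemma transfer_apply_right : transfer x p q q = x q + 1 := by
  simp [transfer]

lemma transfer_apply_of_ne {i : ℕ} (hp : i ≠ p) (hq : i ≠ q) : transfer x p q i = x i := by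
  simp [transfer, hp, hq]

end transfer

def recolorSwap {m : ℕ} (p q : Fin m) (v : ℕ) (z : (Fin m → ℕ) × Perm (Fin m)) :
    (Fin m → ℕ) × Perm (Fin m) :=
  (fun i => if z.2.SameCycle p (swap p q i) then v else z.1 (swap p q i), swap p q * z.2 * swap p q)

section recolorSwap

variable {m : ℕ} {x : ℕ → ℕ} {p q : Fin m}

lemma cycleCount_recolorSwap (v : ℕ) (z : (Fin m → ℕ) × Perm (Fin m)) :
    cycleCount (recolorSwap p q v z).2 = cycleCount z.2 := by
  simpa only [recolorSwap, swap_inv] using cycleCount_conj z.2 (swap p q)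

lemma recolorSwap_fst_apply_right (v : ℕ) (z : (Fin m → ℕ) × Perm (Fin m)) :
    (recolorSwap p q v z).1 q = v := by
  simp [recolorSwap, Perm.SameCycle.refl]

lemma recolorSwap_mem {z : (Fin m → ℕ) × Perm (Fin m)} (hpq : p ≠ q) (hx : x q + 2 ≤ x p)
    (hz : z ∈ BoundedColoredDerangements m x) (hzp : z.1 p = x p) :
    recolorSwap p q (x q + 1) z ∈ BoundedColoredDerangements m (transfer x p q) := by
  obtain ⟨c, σ⟩ := z
  obtain ⟨hbound, hmono, hfix⟩ := hz
  dsimp only at hbound hmono hfix hzp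
  have hpq' : (p : ℕ) ≠ q := Fin.val_ne_of_ne hpq
  have hcycle : ∀ {j}, σ.SameCycle p j → c j = x p := fun h => (h.eq_of_invariant hmono).trans hzp
  have hq : ¬σ.SameCycle p q := fun h => by have := (hbound q).2; rw [hcycle h] at this; omega
  refine ⟨fun i => ?_, fun i => ?_, fun i hi => ?_⟩ <;> simp only [recolorSwap, Perm.mul_apply]
  · split_ifs with hi
    · have hip : i ≠ p := by rintro rfl; exact hq (by simpa using hi)
      rcases eq_or_ne i q with rfl | hiq
      · rw [transfer_apply_right]; omega
      · rw [swap_apply_of_ne_of_ne hip hiq] at hi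
        have := (hbound i).2
        rw [hcycle hi] at this
        rw [transfer_apply_of_ne (Fin.val_ne_of_ne hip) (Fin.val_ne_of_ne hiq)]
        omega
    · have hiq : i ≠ q := by rintro rfl; exact hi (by rw [swap_apply_right])
      rcases eq_or_ne i p with rfl | hip
      · rw [swap_apply_left, transfer_apply_left hpq']
        have := hbound q
        omega
      · rw [swap_apply_of_ne_of_ne hip hiq,
          transfer_apply_of_ne (Fin.val_ne_of_ne hip) (Fin.val_ne_of_ne hiq)]
        exact hbound i
  · simp only [swap_apply_self, Perm.sameCycle_apply_right, hmono]
  · have hi' : σ (swap p q i) = swap p q i := by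
      simpa [recolorSwap, swap_apply_eq_iff] using hi
    split_ifs
    · have := hbound q
      omega
    · exact hfix _ hi'

lemma recolorSwap_injOn (v w : ℕ) :
    Set.InjOn (recolorSwap p q v) {z | (∀ i, z.1 (z.2 i) = z.1 i) ∧ z.1 p = w} := by
  rintro ⟨c₁, σ₁⟩ ⟨hmono₁, hp₁⟩ ⟨c₂, σ₂⟩ ⟨hmono₂, hp₂⟩ heq
  simp only [recolorSwap, Prod.mk.injEq, mul_left_inj, mul_right_inj] at heq
  obtain ⟨hc, rfl⟩ := heq
  refine Prod.ext (funext fun j => ?_) rfl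
  by_cases hj : σ₁.SameCycle p j
  · exact (hj.eq_of_invariant hmono₁).trans (hp₁.trans (hp₂.symm.trans
      (hj.eq_of_invariant hmono₂).symm))
  · simpa [hj] using congrFun hc (swap p q j)

end recolorSwap

section count

variable {m : ℕ} {x : ℕ → ℕ}

lemma finite_boundedColoredDerangements : (BoundedColoredDerangements m x).Finite :=
  ((Set.Finite.pi' fun i : Fin m => Set.finite_Icc 1 (x i)).prod Set.finite_univ).subset
    fun _ hz => ⟨fun i => hz.1 i, trivial⟩

lemma mem_transfer_of_ne {p q : Fin m} {z : (Fin m → ℕ) × Perm (Fin m)} (hpq : p ≠ q)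
    (hz : z ∈ BoundedColoredDerangements m x) (hzp : z.1 p ≠ x p) :
    z ∈ BoundedColoredDerangements m (transfer x p q) := by
  refine ⟨fun i => ⟨(hz.1 i).1, ?_⟩, hz.2⟩
  have hi := (hz.1 i).2
  rcases eq_or_ne i p with rfl | hip
  · rw [transfer_apply_left (Fin.val_ne_of_ne hpq)]
    omega
  rcases eq_or_ne i q with rfl | hiq
  · rw [transfer_apply_right]
    omega
  · rwa [transfer_apply_of_ne (Fin.val_ne_of_ne hip) (Fin.val_ne_of_ne hiq)]

lemma boundedDerangementCount_congr {y : ℕ → ℕ} (h : ∀ i < m, x i = y i) (k : ℕ) :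
    boundedDerangementCount m x k = boundedDerangementCount m y k := by
  have : BoundedColoredDerangements m x = BoundedColoredDerangements m y := by
    ext z
    simp only [BoundedColoredDerangements, Set.mem_ofPred_eq, h _ (Fin.is_lt _)]
  rw [boundedDerangementCount, boundedDerangementCount, this]

lemma boundedDerangementCount_le_transfer {p q : Fin m} (hpq : p ≠ q) (hx : x q + 2 ≤ x p)
    (k : ℕ) : boundedDerangementCount m x k ≤ boundedDerangementCount m (transfer x p q) k := by
  classical
  let Φ z := if z.1 p = x p then recolorSwap p q (x q + 1) z else z
  refine Set.ncard_le_ncard_of_injOn Φ ?_ ?_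
    (finite_boundedColoredDerangements.subset fun z hz => hz.1)
  · rintro z ⟨hz, hk⟩
    by_cases hzp : z.1 p = x p
    · simp only [Φ, if_pos hzp]
      exact ⟨recolorSwap_mem hpq hx hz hzp, (cycleCount_recolorSwap _ z).trans hk⟩
    · simp only [Φ, if_neg hzp]
      exact ⟨mem_transfer_of_ne hpq hz hzp, hk⟩
  · rintro z₁ ⟨hz₁, -⟩ z₂ ⟨hz₂, -⟩ h
    have hq₁ := (hz₁.1 q).2
    have hq₂ := (hz₂.1 q).2
    by_cases h₁ : z₁.1 p = x p <;> by_cases h₂ : z₂.1 p = x p <;>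
      simp only [Φ, h₁, h₂, if_true, if_false] at h
    · exact recolorSwap_injOn _ (x p) ⟨hz₁.2.1, h₁⟩ ⟨hz₂.2.1, h₂⟩ h
    · have := congrArg (·.1 q) h
      simp only [recolorSwap_fst_apply_right] at this
      omega
    · have := congrArg (·.1 q) h
      simp only [recolorSwap_fst_apply_right] at this
      omega
    · exact h

end count

-- The indicators stand on both sides so that no truncated subtraction occurs.
lemma sum_range_transfer {x : ℕ → ℕ} {p q : ℕ} (hp : 1 ≤ x p) (hpq : p ≠ q) (t : ℕ) :
    ∑ i ∈ range t, transfer x p q i + (if p < t then 1 else 0) =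
      ∑ i ∈ range t, x i + (if q < t then 1 else 0) := by
  induction t with
  | zero => simp
  | succ t ih =>
    rw [sum_range_succ, sum_range_succ]
    rcases eq_or_ne t p with rfl | htp
    · rw [transfer_apply_left hpq]
      split_ifs at ih ⊢ <;> omega
    rcases eq_or_ne t q with rfl | htq
    · rw [transfer_apply_right]
      split_ifs at ih ⊢ <;> omega
    · rw [transfer_apply_of_ne htp htq]
      split_ifs at ih ⊢ <;> omega

section dominance

variable {m : ℕ} {x y : ℕ → ℕ}

/-- `a` is the first index with `x a < y a`, and `b < a` is any index with `y b < x b`. -/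
lemma exists_transfer_of_dominates (hy : AntitoneOn y (Set.Iio m))
    (hdom : ∀ t ≤ m, ∑ i ∈ range t, y i ≤ ∑ i ∈ range t, x i) (hex : ∃ a < m, x a < y a) :
    ∃ b a, b < a ∧ a < m ∧ x a + 2 ≤ x b ∧
      ∀ t ≤ m, ∑ i ∈ range t, y i ≤ ∑ i ∈ range t, transfer x b a i := by
  classical
  let a := Nat.find hex
  obtain ⟨ham, hxa⟩ : a < m ∧ x a < y a := Nat.find_spec hex
  have hle : ∀ i < a, y i ≤ x i := fun i hi =>
    not_lt.1 fun h => Nat.find_min hex hi ⟨hi.trans ham, h⟩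
  have hlt : ∑ i ∈ range a, y i < ∑ i ∈ range a, x i := by
    have := hdom (a + 1) ham
    rw [sum_range_succ, sum_range_succ] at this
    omega
  obtain ⟨b, hb, hxb⟩ := exists_lt_of_sum_lt hlt
  rw [mem_range] at hb
  have hyab : y a ≤ y b := hy (hb.trans ham) ham hb.le
  refine ⟨b, a, hb, ham, by omega, fun t ht => ?_⟩
  have key := sum_range_transfer (x := x) (by omega) hb.ne t
  by_cases hbt : b < t ∧ t ≤ a
  · have : ∑ i ∈ range t, y i < ∑ i ∈ range t, x i :=
      sum_lt_sum (fun i hi => hle i (by rw [mem_range] at hi; omega))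
        ⟨b, mem_range.2 hbt.1, hxb⟩
    rw [if_pos hbt.1, if_neg (by omega)] at key
    omega
  · have := hdom t ht
    split_ifs at key <;> omega

end dominance

theorem boundedDerangementCount_le_of_dominates {m : ℕ} {x y : ℕ → ℕ}
    (hy : AntitoneOn y (Set.Iio m))
    (hdom : ∀ t ≤ m, ∑ i ∈ range t, y i ≤ ∑ i ∈ range t, x i)
    (hsum : ∑ i ∈ range m, x i = ∑ i ∈ range m, y i) (k : ℕ) :
    boundedDerangementCount m x k ≤ boundedDerangementCount m y k := by
  induction hP : ∑ t ∈ range (m + 1), ∑ i ∈ range t, x i using Nat.strong_induction_on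
    generalizing x with
  | _ P ih =>
  by_cases hex : ∃ a < m, x a < y a
  · obtain ⟨b, a, hba, ham, hgap, hdom'⟩ := exists_transfer_of_dominates hy hdom hex
    have key := sum_range_transfer (x := x) (by omega) hba.ne
    have hsum' : ∑ i ∈ range m, transfer x b a i = ∑ i ∈ range m, y i := by
      have := key m
      rw [if_pos (hba.trans ham), if_pos ham] at this
      omega
    have hP' : ∑ t ∈ range (m + 1), ∑ i ∈ range t, transfer x b a i < P := by
      refine hP ▸ sum_lt_sum (fun t _ => ?_) ⟨a, mem_range.2 (by omega), ?_⟩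
      · have := key t
        split_ifs at this <;> omega
      · have := key a
        rw [if_pos hba, if_neg (lt_irrefl a)] at this
        omega
    exact (boundedDerangementCount_le_transfer (p := ⟨b, hba.trans ham⟩) (q := ⟨a, ham⟩)
      (Fin.ne_of_val_ne hba.ne) hgap k).trans (ih _ hP' hdom' hsum' rfl)
  · push Not at hex
    refine (boundedDerangementCount_congr (fun i hi => ?_) k).le
    exact ((sum_eq_sum_iff_of_le fun i hi => hex i (mem_range.1 hi)).1 hsum.symm i
      (mem_range.2 hi)).symm

lemma conjP_cons (a : ℕ) (L : List ℕ) (j : ℕ) :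
    conjP (a :: L) j = (if j ≤ a then 1 else 0) + conjP L j := by
  simp only [conjP, List.filter_cons, decide_eq_true_eq]
  split_ifs <;> simp [add_comm]

lemma conjP_antitone (L : List ℕ) : Antitone (conjP L) := fun _ _ h =>
  (L.monotone_filter_right fun p hp => by simp only [decide_eq_true_eq] at hp ⊢; omega).length_le

lemma sum_range_ite_succ_le (a t : ℕ) : ∑ j ∈ range t, (if j + 1 ≤ a then 1 else 0) = min a t := by
  induction t with
  | zero => simp
  | succ t ih => rw [sum_range_succ, ih]; split_ifs <;> omega

lemma sum_range_conjP_succ (L : List ℕ) (t : ℕ) :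
    ∑ j ∈ range t, conjP L (j + 1) = (L.map (min · t)).sum := by
  induction L with
  | nil => simp [conjP]
  | cons a L ih =>
    simp only [conjP_cons, sum_add_distrib, ih, sum_range_ite_succ_le, List.map_cons, List.sum_cons]

lemma le_headI_of_mem {L : List ℕ} (hL : L.Pairwise (· ≥ ·)) {p : ℕ} (hp : p ∈ L) :
    p ≤ L.headI := by
  cases L with
  | nil => cases hp
  | cons a L =>
    rcases List.mem_cons.1 hp with rfl | hp
    · exact le_rfl
    · exact List.rel_of_pairwise_cons hL hp

lemma sum_range_conjP_succ_headI {L : List ℕ} (hL : L.Pairwise (· ≥ ·)) :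
    ∑ j ∈ range L.headI, conjP L (j + 1) = L.sum := by
  rw [sum_range_conjP_succ, List.map_congr_left fun p hp => min_eq_left (le_headI_of_mem hL hp),
    List.map_id']

lemma sum_take_le_sum_map_tsub_add (v : List ℕ) (s t : ℕ) :
    (v.take s).sum ≤ (v.map (· - t)).sum + s * t := by
  induction v generalizing s with
  | nil => simp
  | cons a v ih =>
    cases s with
    | zero => simp
    | succ s =>
      simp only [List.take_succ_cons, List.sum_cons, List.map_cons, add_mul, one_mul]
      have := ih s
      omega

lemma exists_sum_map_tsub_add_le_sum_take {v : List ℕ} (hv : v.Pairwise (· ≥ ·)) (t : ℕ) :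
    ∃ s, (v.map (· - t)).sum + s * t ≤ (v.take s).sum := by
  induction v with
  | nil => exact ⟨0, by simp⟩
  | cons a v ih =>
    obtain ⟨ha, hv⟩ := List.pairwise_cons.1 hv
    by_cases hat : t < a
    · obtain ⟨s, hs⟩ := ih hv
      refine ⟨s + 1, ?_⟩
      simp only [List.take_succ_cons, List.sum_cons, List.map_cons, add_mul, one_mul]
      omega
    · have hv0 : (v.map (· - t)).sum = 0 := List.sum_eq_zero fun n hn => by
        obtain ⟨p, hp, rfl⟩ := List.mem_map.1 hn
        have := ha p hp
        omega
      refine ⟨0, ?_⟩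
      simp only [List.map_cons, List.sum_cons, hv0]
      omega

lemma sum_map_min_add_sum_map_tsub (v : List ℕ) (t : ℕ) :
    (v.map (min · t)).sum + (v.map (· - t)).sum = v.sum := by
  induction v with
  | nil => simp
  | cons a v ih => simp only [List.map_cons, List.sum_cons]; omega

/-- Compare the excesses `∑ (p - t)` over the parts `p` through the partial sums up to the last
part of `M` exceeding `t`. -/
lemma sum_map_min_le_of_dominates {M L : List ℕ} (hM : M.Pairwise (· ≥ ·)) (hsum : M.sum = L.sum)
    (hdom : ∀ s, (M.take s).sum ≤ (L.take s).sum) (t : ℕ) :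
    (L.map (min · t)).sum ≤ (M.map (min · t)).sum := by
  obtain ⟨s, hs⟩ := exists_sum_map_tsub_add_le_sum_take hM t
  have := sum_take_le_sum_map_tsub_add L s t
  have := hdom s
  have := sum_map_min_add_sum_map_tsub M t
  have := sum_map_min_add_sum_map_tsub L t
  omega

lemma dCount_eq_boundedDerangementCount (L : List ℕ) (k : ℕ) :
    dCount L k = boundedDerangementCount L.headI (fun j => conjP L (j + 1)) k := by
  simp only [dCount, boundedDerangementCount, ColoredDerangements, ColoredPerms,
    BoundedColoredDerangements, Set.mem_ofPred_eq, and_assoc]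

/-- Ku–Wales monotonicity, combinatorial form. -/
theorem ku_wales_monotonicity (M L : List ℕ) (hM : IsPartition M) (hL : IsPartition L)
    (hsum : M.sum = L.sum) (hhead : M.headI = L.headI)
    (hdom : ∀ t : ℕ, (M.take t).sum ≤ (L.take t).sum) :
    (∀ k : ℕ, 1 ≤ k → dCount M k ≤ dCount L k) ∧
      (∀ α : ℝ, 0 ≤ α → JackD M α ≤ JackD L α) := by
  have hcount : ∀ k, dCount M k ≤ dCount L k := fun k => by
    rw [dCount_eq_boundedDerangementCount, dCount_eq_boundedDerangementCount, hhead]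
    refine boundedDerangementCount_le_of_dominates
      (fun i _ j _ hij => conjP_antitone L (by omega)) (fun t _ => ?_) ?_ k
    · rw [sum_range_conjP_succ, sum_range_conjP_succ]
      exact sum_map_min_le_of_dominates hM.1 hsum hdom t
    · rw [← hhead, sum_range_conjP_succ_headI hM.1, hhead, sum_range_conjP_succ_headI hL.1, hsum]
  refine ⟨fun k _ => hcount k, fun α hα => ?_⟩
  rw [JackD, JackD, hhead]
  gcongr with k
  exact_mod_cast hcount k
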